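/- arXiv:0905.2287 — 3 statements merged into one kernel-verified Lean document; each statement's English description precedes it below -/
import Mathlib

section
/- Let G be a finite connected weighted graph and T a spanning tree of G that is not a minimum spanning tree. Then there exists a non-tree edge e and a tree edge f in the fundamental cycle C_e with w(f) > w(e) (i.e., an improvement exists). -/
/-- `T` is a spanning tree of `G`. -/
def IsSpanningTree {V : Type*} (G T : SimpleGraph V) : Prop :=
  T ≤ G ∧ T.IsTree

/-- `f` lies on the fundamental cycle of the (non-tree) edge `{u,v}` w.r.t. the
tree `T`, i.e. on the unique `T`-path from `u` to `v`. -/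
def InFundCycle {V : Type*} (T : SimpleGraph V) (u v : V) (f : Sym2 V) : Prop :=
  ∃ p : T.Walk u v, p.IsPath ∧ f ∈ p.edges

/-- Total weight of the edges of `T`. -/
noncomputable def treeWeight {V : Type*} (w : Sym2 V → ℝ) (T : SimpleGraph V) : ℝ :=
  ∑ᶠ e ∈ T.edgeSet, w e

/-- One improvement step: exchange a tree edge `f` of the fundamental cycle of a
strictly lighter non-tree edge `{u,v}` for that edge. -/
def ImproveStep {V : Type*} (G : SimpleGraph V) (w : Sym2 V → ℝ)
    (T T' : SimpleGraph V) : Prop :=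
  ∃ u v f, G.Adj u v ∧ s(u, v) ∉ T.edgeSet ∧ f ∈ T.edgeSet ∧ InFundCycle T u v f ∧
    w s(u, v) < w f ∧
    T' = SimpleGraph.fromEdgeSet ((T.edgeSet \ {f}) ∪ {s(u, v)})

/-!
Cycle optimality implies minimality, by an exchange argument. Assume every tree edge on the
fundamental cycle of a non-tree edge `uv` weighs at most `w(uv)`, and let `T'` be another
spanning tree. Deleting an edge `uv ∈ T' \ T` splits `T'` into the two sides of `u` and `v`, and
the `T`-path from `u` to `v` has an edge `xy` crossing between them. Then `T' - uv + xy` is a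
spanning tree, no heavier than `T'`, with one edge fewer outside `T`; induction on `|T' \ T|`
gives `w(T) ≤ w(T')`.
-/

namespace SimpleGraph

variable {V : Type*} {G T : SimpleGraph V}

lemma Connected.reachable_deleteEdges_or (hG : G.Connected) (u v w : V) :
    (G.deleteEdges {s(u, v)}).Reachable u w ∨ (G.deleteEdges {s(u, v)}).Reachable v w := by
  set K := G.deleteEdges {s(u, v)}
  by_contra hw
  obtain ⟨p⟩ := hG.preconnected u w
  obtain ⟨⟨⟨a, b⟩, hab⟩, -, ha, hb⟩ :=
    p.exists_boundary_dart {z | K.Reachable u z ∨ K.Reachable v z} (.inl .rfl) hw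
  apply hb
  by_cases he : s(a, b) = s(u, v)
  · rcases Sym2.eq_iff.mp he with ⟨-, rfl⟩ | ⟨-, rfl⟩
    · exact .inr .rfl
    · exact .inl .rfl
  · have hK : K.Adj a b := deleteEdges_adj.mpr ⟨hab, by simpa using he⟩
    exact ha.imp (·.trans hK.reachable) (·.trans hK.reachable)

lemma IsTree.exists_isTree_deleteEdges_sup_edge (hT : T.IsTree) {u v : V} (huv : T.Adj u v)
    (p : G.Walk u v) (hp : s(u, v) ∉ p.edges) :
    ∃ x y, s(x, y) ∈ p.edges ∧ ¬T.Adj x y ∧ (T.deleteEdges {s(u, v)} ⊔ edge x y).IsTree := by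
  set K := T.deleteEdges {s(u, v)}
  have hsep : ¬K.Reachable u v :=
    isBridge_iff.mp (isAcyclic_iff_forall_adj_isBridge.mp hT.isAcyclic huv)
  obtain ⟨⟨⟨x, y⟩, hxy⟩, hd, hx, hy⟩ := p.exists_boundary_dart {z | K.Reachable u z} .rfl hsep
  have hmem : s(x, y) ∈ p.edges := by
    rw [Walk.edges_eq_map_darts]; exact List.mem_map_of_mem hd
  have hnreach : ¬K.Reachable x y := fun h => hy (hx.trans h)
  have hnadj : ¬T.Adj x y := fun h => hnreach <|
    (deleteEdges_adj.mpr ⟨h, fun he => hp (by rwa [← Set.mem_singleton_iff.mp he])⟩).reachable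
  refine ⟨x, y, hmem, hnadj, ?_,
    (hT.isAcyclic.anti (deleteEdges_le _)).sup_edge_of_not_reachable hnreach⟩
  have hKle : K ≤ K ⊔ edge x y := le_sup_left
  have hyv : K.Reachable v y :=
    (hT.connected.reachable_deleteEdges_or u v y).resolve_left hy
  have hxy' : (K ⊔ edge x y).Adj x y := Or.inr ((edge_adj ..).mpr ⟨.inl ⟨rfl, rfl⟩, hxy.ne⟩)
  have huv' : (K ⊔ edge x y).Reachable u v :=
    ((hx.mono hKle).trans hxy'.reachable).trans (hyv.mono hKle).symm
  refine (connected_iff_exists_forall_reachable _).mpr ⟨u, fun z => ?_⟩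
  rcases hT.connected.reachable_deleteEdges_or u v z with h | h
  · exact h.mono hKle
  · exact huv'.trans (h.mono hKle)

end SimpleGraph

open SimpleGraph

lemma treeWeight_deleteEdges_sup_edge {V : Type*} [Finite V] (w : Sym2 V → ℝ)
    {H : SimpleGraph V} {e : Sym2 V} (he : e ∈ H.edgeSet) {x y : V} (hne : x ≠ y)
    (hxy : ¬H.Adj x y) :
    treeWeight w (H.deleteEdges {e} ⊔ edge x y) + w e = treeWeight w H + w s(x, y) := by
  have hsplit : treeWeight w H = w e + ∑ᶠ f ∈ H.edgeSet \ {e}, w f := by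
    rw [treeWeight, ← finsum_mem_insert _ (fun h => h.2 rfl) (Set.toFinite _),
      Set.insert_sdiff_self_of_mem he]
  rw [hsplit, treeWeight, edgeSet_sup, edgeSet_deleteEdges, edgeSet_edge_of_ne hne,
    Set.union_singleton, finsum_mem_insert _ (fun h => hxy h.1) (Set.toFinite _)]
  ring

theorem treeWeight_le_of_forall_inFundCycle {V : Type*} [Finite V] {G T : SimpleGraph V}
    (w : Sym2 V → ℝ) (hT : IsSpanningTree G T)
    (hopt : ∀ u v f, G.Adj u v → ¬T.Adj u v → InFundCycle T u v f → w f ≤ w s(u, v))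
    {T' : SimpleGraph V} (hT' : IsSpanningTree G T') : treeWeight w T ≤ treeWeight w T' := by
  induction hn : (T'.edgeSet \ T.edgeSet).ncard generalizing T' with
  | zero =>
    have hle : T' ≤ T := edgeSet_subset_edgeSet.mp <|
      Set.sdiff_eq_empty.mp <| (Set.ncard_eq_zero (Set.toFinite _)).mp hn
    rw [(isTree_iff_minimal_connected.mp hT.2).eq_of_le hT'.2.connected hle]
  | succ n ih =>
    have hne : (T'.edgeSet \ T.edgeSet).Nonempty := Set.nonempty_of_ncard_ne_zero (by omega)
    obtain ⟨⟨u, v⟩, huvD⟩ := hne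
    obtain ⟨p, hp, -⟩ := hT.2.existsUnique_path u v
    obtain ⟨x, y, hxy, hxyT', hH'⟩ := hT'.2.exists_isTree_deleteEdges_sup_edge huvD.1 p
      fun h => huvD.2 (p.edges_subset_edgeSet h)
    set H' := T'.deleteEdges {s(u, v)} ⊔ edge x y
    have hxyT : s(x, y) ∈ T.edgeSet := p.edges_subset_edgeSet hxy
    have hH'G : H' ≤ G :=
      sup_le ((deleteEdges_le _).trans hT'.1) (G.edge_le_iff.mpr (.inr (hT.1 hxyT)))
    have hdiff : H'.edgeSet \ T.edgeSet = (T'.edgeSet \ T.edgeSet) \ {s(u, v)} := by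
      rw [edgeSet_sup, edgeSet_deleteEdges, edgeSet_edge_of_ne (T.ne_of_adj hxyT),
        Set.union_sdiff_distrib, Set.sdiff_eq_empty.mpr (Set.singleton_subset_iff.mpr hxyT),
        Set.union_empty, Set.sdiff_sdiff_comm]
    have hcard : (H'.edgeSet \ T.edgeSet).ncard = n := by
      rw [hdiff, Set.ncard_sdiff_singleton_of_mem huvD, hn, Nat.add_sub_cancel]
    have hexchange := treeWeight_deleteEdges_sup_edge w huvD.1 (T.ne_of_adj hxyT) hxyT'
    have hlighter := hopt u v s(x, y) (hT'.1 huvD.1) huvD.2 ⟨p, hp, hxy⟩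
    have := ih ⟨hH'G, hH'⟩ hcard
    linarith

theorem not_mst_imp_improvement_general {V : Type*} [Fintype V] (G T : SimpleGraph V)
    (w : Sym2 V → ℝ) (hT : IsSpanningTree G T)
    (hnotmst : ∃ T', IsSpanningTree G T' ∧ treeWeight w T' < treeWeight w T) :
    ∃ u v f, G.Adj u v ∧ s(u, v) ∉ T.edgeSet ∧ f ∈ T.edgeSet ∧
      InFundCycle T u v f ∧ w s(u, v) < w f := by
  obtain ⟨T', hT', hlt⟩ := hnotmst
  by_contra! hopt
  refine hlt.not_ge (treeWeight_le_of_forall_inFundCycle w hT (fun u v f huv huvT hf => ?_) hT')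
  obtain ⟨p, hp, hfp⟩ := hf
  exact hopt u v f huv huvT (p.edges_subset_edgeSet hfp) ⟨p, hp, hfp⟩

/-- Red rule, converse direction: a spanning tree which is not minimum admits an
improvement, i.e. a non-tree edge `e = {u,v}` and a tree edge `f` on its
fundamental cycle with `w f > w e`. -/
theorem not_mst_imp_improvement {V : Type*} [Fintype V] (G T : SimpleGraph V)
    (w : Sym2 V → ℝ) (hw : ∀ x, 0 < w x) (hG : G.Connected)
    (hT : IsSpanningTree G T)
    (hnotmst : ∃ T', IsSpanningTree G T' ∧ treeWeight w T' < treeWeight w T) :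
    ∃ u v f, G.Adj u v ∧ s(u, v) ∉ T.edgeSet ∧ f ∈ T.edgeSet ∧
      InFundCycle T u v f ∧ w s(u, v) < w f :=
  not_mst_imp_improvement_general G T w hT hnotmst
end

section
/- Let G be a finite connected weighted graph. Starting from any spanning tree T₀ and repeatedly applying improvements (replacing a tree edge f by a non-tree edge e with f in C_e and w(f) > w(e)), any sequence of improvements terminates, and the final tree is a minimum spanning tree of G. -/
/-!
Each improvement strictly lowers the total weight and there are only finitely many graphs on `V`,
so no infinite chain of improvements exists.

For optimality, let `T` admit no improvement and let `T'` be any spanning tree. An edge `e = uv`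
of `T'` outside `T` is a bridge of `T'`; the `T`-path from `u` to `v` must cross the cut it
defines along some edge `f ∉ T'`, and `w f ≤ w e` since exchanging `f` for `e` in `T` is not an
improvement. Exchanging `e` for `f` in `T'` then gives a spanning tree that is no heavier than
`T'` and has one edge fewer outside `T`, so induction on `|T' \ T|` ends at `T' = T`.
-/

open SimpleGraph

theorem finsum_mem_diff_singleton_union_singleton {α M : Type*} [AddCommGroup M] (g : α → M)
    {s : Set α} {a b : α} (hs : s.Finite) (ha : a ∈ s) (hb : b ∉ s) :
    ∑ᶠ x ∈ s \ {a} ∪ {b}, g x = ∑ᶠ x ∈ s, g x - g a + g b := by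
  have hsplit := finsum_mem_insert g (fun h => h.2 rfl) (hs.sdiff (t := {a}))
  rw [Set.insert_sdiff_singleton, Set.insert_eq_of_mem ha] at hsplit
  rw [Set.union_singleton, finsum_mem_insert g (fun h => hb h.1) hs.sdiff, hsplit]
  abel

namespace SimpleGraph

variable {V : Type*}

def exchange (T : SimpleGraph V) (f e : Sym2 V) : SimpleGraph V :=
  fromEdgeSet ((T.edgeSet \ {f}) ∪ {e})

theorem exchange_eq_deleteEdges_sup_edge (T : SimpleGraph V) (f : Sym2 V) (u v : V) :
    T.exchange f s(u, v) = T.deleteEdges {f} ⊔ edge u v := by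
  rw [exchange, fromEdgeSet_union, deleteEdges, fromEdgeSet_sdiff, fromEdgeSet_edgeSet, edge]

theorem edgeSet_exchange {T : SimpleGraph V} (f : Sym2 V) {u v : V} (huv : u ≠ v) :
    (T.exchange f s(u, v)).edgeSet = T.edgeSet \ {f} ∪ {s(u, v)} := by
  rw [exchange_eq_deleteEdges_sup_edge, edgeSet_sup, edgeSet_deleteEdges, edgeSet_edge_of_ne huv]

theorem exchange_le {G T : SimpleGraph V} (hT : T ≤ G) (f : Sym2 V) {u v : V} (huv : G.Adj u v) :
    T.exchange f s(u, v) ≤ G := by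
  rw [exchange_eq_deleteEdges_sup_edge]
  exact sup_le ((deleteEdges_le _).trans hT) ((edge_le_iff _).2 (Or.inr huv))

theorem treeWeight_exchange [Finite V] (w : Sym2 V → ℝ) {T : SimpleGraph V} {f : Sym2 V} {u v : V}
    (huv : u ≠ v) (hf : f ∈ T.edgeSet) (he : s(u, v) ∉ T.edgeSet) :
    treeWeight w (T.exchange f s(u, v)) = treeWeight w T - w f + w s(u, v) := by
  rw [treeWeight, treeWeight, edgeSet_exchange f huv,
    finsum_mem_diff_singleton_union_singleton w (Set.toFinite _) hf he]

theorem Connected.reachable_or_reachable_deleteEdges {G : SimpleGraph V} (hG : G.Connected)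
    (u v z : V) :
    (G.deleteEdges {s(u, v)}).Reachable u z ∨ (G.deleteEdges {s(u, v)}).Reachable v z := by
  set D := G.deleteEdges {s(u, v)}
  by_contra h
  obtain ⟨p⟩ := hG u z
  obtain ⟨d, -, hx, hy⟩ :=
    p.exists_boundary_dart {y | D.Reachable u y ∨ D.Reachable v y} (Or.inl .rfl) h
  have hne : s(d.fst, d.snd) ≠ s(u, v) := by
    intro heq
    rcases Sym2.eq_iff.1 heq with ⟨-, hv⟩ | ⟨-, hu⟩
    · exact hy (Or.inr (hv ▸ .rfl))
    · exact hy (Or.inl (hu ▸ .rfl))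
  have hadj : D.Adj d.fst d.snd := deleteEdges_adj.2 ⟨d.adj, hne⟩
  exact hy (hx.imp (·.trans hadj.reachable) (·.trans hadj.reachable))

theorem IsTree.isTree_exchange {T : SimpleGraph V} (hT : T.IsTree) {u v a b : V}
    (ha : (T.deleteEdges {s(u, v)}).Reachable u a)
    (hb : ¬ (T.deleteEdges {s(u, v)}).Reachable u b) :
    (T.exchange s(u, v) s(a, b)).IsTree := by
  set D := T.deleteEdges {s(u, v)}
  have hab : ¬ D.Reachable a b := fun h => hb (ha.trans h)
  have hvb : D.Reachable v b :=
    (hT.connected.reachable_or_reachable_deleteEdges u v b).resolve_left hb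
  have hle : D ≤ D ⊔ edge a b := le_sup_left
  have hab_adj : (D ⊔ edge a b).Adj a b :=
    Or.inr ((edge_adj a b a b).2 ⟨Or.inl ⟨rfl, rfl⟩, fun h => hab (h ▸ .rfl)⟩)
  have huv : (D ⊔ edge a b).Reachable u v :=
    ((ha.mono hle).trans hab_adj.reachable).trans (hvb.mono hle).symm
  rw [exchange_eq_deleteEdges_sup_edge]
  refine ⟨(connected_iff_exists_forall_reachable _).2 ⟨u, fun z => ?_⟩,
    (hT.isAcyclic.anti (deleteEdges_le _)).sup_edge_of_not_reachable hab⟩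
  rcases hT.connected.reachable_or_reachable_deleteEdges u v z with h | h
  · exact h.mono hle
  · exact huv.trans (h.mono hle)

theorem IsTree.eq_of_le {T T' : SimpleGraph V} (hT : T.IsTree) (hT' : T'.Connected) (hle : T' ≤ T) :
    T' = T :=
  le_antisymm hle ((isTree_iff_minimal_connected.1 hT).2 hT' hle)

theorem exists_inFundCycle_not_reachable_deleteEdges {T T' : SimpleGraph V} (hT : T.Connected)
    (hT' : T'.IsAcyclic) {u v : V} (huv : T'.Adj u v) :
    ∃ a b, InFundCycle T u v s(a, b) ∧ (T'.deleteEdges {s(u, v)}).Reachable u a ∧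
      ¬ (T'.deleteEdges {s(u, v)}).Reachable u b := by
  have hv : ¬ (T'.deleteEdges {s(u, v)}).Reachable u v :=
    isBridge_iff.1 (isAcyclic_iff_forall_adj_isBridge.1 hT' huv)
  obtain ⟨p, hp⟩ := hT.exists_isPath u v
  obtain ⟨d, hd, ha, hb⟩ :=
    p.exists_boundary_dart {z | (T'.deleteEdges {s(u, v)}).Reachable u z} .rfl hv
  exact ⟨d.fst, d.snd, ⟨p, hp, p.edges_eq_map_darts ▸ List.mem_map_of_mem hd⟩, ha, hb⟩

end SimpleGraph

section ImproveStep

variable {V : Type*} {G : SimpleGraph V} {w : Sym2 V → ℝ}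

theorem ImproveStep.treeWeight_lt [Finite V] {T T' : SimpleGraph V} (h : ImproveStep G w T T') :
    treeWeight w T' < treeWeight w T := by
  obtain ⟨u, v, f, huv, he, hf, -, hlt, rfl⟩ := h
  change treeWeight w (T.exchange f s(u, v)) < _
  rw [treeWeight_exchange w huv.ne hf he]
  linarith

theorem exists_exchange_of_forall_not_improveStep [Finite V] {T T' : SimpleGraph V}
    (hT : IsSpanningTree G T) (hopt : ∀ T'', ¬ ImproveStep G w T T'') (hT' : IsSpanningTree G T')
    {e : Sym2 V} (heT' : e ∈ T'.edgeSet) (heT : e ∉ T.edgeSet) :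
    ∃ T'', IsSpanningTree G T'' ∧ treeWeight w T'' ≤ treeWeight w T' ∧
      T''.edgeSet \ T.edgeSet = (T'.edgeSet \ T.edgeSet) \ {e} := by
  induction e using Sym2.ind with | h u v => ?_
  obtain ⟨a, b, hfund, ha, hb⟩ :=
    exists_inFundCycle_not_reachable_deleteEdges hT.2.connected hT'.2.isAcyclic heT'
  have hfT : s(a, b) ∈ T.edgeSet := by
    obtain ⟨p, -, hp⟩ := hfund
    exact p.edges_subset_edgeSet hp
  have hne : s(a, b) ≠ s(u, v) := fun h => heT (h ▸ hfT)
  have hfT' : s(a, b) ∉ T'.edgeSet := fun h =>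
    hb (ha.trans (deleteEdges_adj.2 ⟨h, hne⟩).reachable)
  have hwf : w s(a, b) ≤ w s(u, v) :=
    not_lt.1 fun hlt => hopt _ ⟨u, v, s(a, b), hT'.1 heT', heT, hfT, hfund, hlt, rfl⟩
  refine ⟨T'.exchange s(u, v) s(a, b),
    ⟨exchange_le hT'.1 _ (hT.1 hfT), hT'.2.isTree_exchange ha hb⟩, ?_, ?_⟩
  · rw [treeWeight_exchange w (T.ne_of_adj hfT) heT' hfT']
    linarith
  · rw [edgeSet_exchange _ (T.ne_of_adj hfT)]
    grind

theorem treeWeight_le_of_forall_not_improveStep [Finite V] {T T' : SimpleGraph V}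
    (hT : IsSpanningTree G T) (hopt : ∀ T'', ¬ ImproveStep G w T T'')
    (hT' : IsSpanningTree G T') :
    treeWeight w T ≤ treeWeight w T' := by
  induction hn : (T'.edgeSet \ T.edgeSet).ncard generalizing T' with
  | zero =>
    have hle : T' ≤ T := edgeSet_subset_edgeSet.1 <|
      Set.sdiff_eq_empty.1 ((Set.ncard_eq_zero (Set.toFinite _)).1 hn)
    rw [hT.2.eq_of_le hT'.2.connected hle]
  | succ n ih =>
    obtain ⟨e, he⟩ := Set.nonempty_of_ncard_ne_zero (s := T'.edgeSet \ T.edgeSet) (by omega)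
    obtain ⟨T'', hT'', hw, hdiff⟩ :=
      exists_exchange_of_forall_not_improveStep hT hopt hT' he.1 he.2
    refine (ih hT'' ?_).trans hw
    rw [hdiff, Set.ncard_sdiff_singleton_of_mem he, hn, Nat.add_sub_cancel]

end ImproveStep

theorem improvements_terminate_and_yield_mst_general {V : Type*} [Fintype V]
    (G : SimpleGraph V) (w : Sym2 V → ℝ) :
    (∀ seq : ℕ → SimpleGraph V, IsSpanningTree G (seq 0) →
      (∀ n, ImproveStep G w (seq n) (seq (n + 1))) → False) ∧
    (∀ T, IsSpanningTree G T → (∀ T', ¬ ImproveStep G w T T') →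
      ∀ T', IsSpanningTree G T' → treeWeight w T ≤ treeWeight w T') := by
  refine ⟨fun seq _ hstep => ?_, fun T hT hopt T' hT' =>
    treeWeight_le_of_forall_not_improveStep hT hopt hT'⟩
  have hanti : StrictAnti (treeWeight w ∘ seq) :=
    strictAnti_nat_of_succ_lt fun n => (hstep n).treeWeight_lt
  exact not_injective_infinite_finite seq hanti.injective.of_comp

/-- Any sequence of improvements terminates (no infinite chain of improvement
steps from a spanning tree), and a spanning tree admitting no improvement is a
minimum spanning tree. -/
theorem improvements_terminate_and_yield_mst {V : Type*} [Fintype V]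
    (G : SimpleGraph V) (w : Sym2 V → ℝ) (hw : ∀ x, 0 < w x) (hG : G.Connected) :
    (∀ seq : ℕ → SimpleGraph V, IsSpanningTree G (seq 0) →
      (∀ n, ImproveStep G w (seq n) (seq (n + 1))) → False) ∧
    (∀ T, IsSpanningTree G T → (∀ T', ¬ ImproveStep G w T T') →
      ∀ T', IsSpanningTree G T' → treeWeight w T ≤ treeWeight w T') :=
  improvements_terminate_and_yield_mst_general G w
end

section
/- Let G be a finite connected graph with n vertices and m edges. Any sequence of improvements in which each step strictly decreases the multiset of tree-edge weights can replace each of the m - n + 1 non-tree edges at most once per 'pass', and there exists a family of weighted graphs in which Θ(m - n + 1) successive improvements are required before reaching a minimum spanning tree. -/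
/-!
The instance is a bouquet of `k` triangles `root, a j, b j` glued at `root`, in which the spoke
`root–b j` weighs `2` and every other edge weighs `1`. The star at `root` weighs `3k`; exchanging
the spokes `root–b j` for the rungs `a j–b j`, one triangle at a time, leads to a spanning tree of
weight `2k = |V| - 1`, which is minimum because all weights are at least `1`. Since all weights lie
in `[1, 2]`, a single exchange lowers the weight of a tree by at most `1`, so every improvement
sequence from the star needs at least `k` steps to get from `3k` down to `2k`.
-/

theorem Set.range_update_of_injective {α β : Type*} [DecidableEq α] {f : α → β}
    (hf : Function.Injective f) (a : α) (b : β) :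
    Set.range (Function.update f a b) = insert b (Set.range f \ {f a}) := by
  ext y
  constructor
  · rintro ⟨x, rfl⟩
    rcases eq_or_ne x a with rfl | hx
    · simp
    · exact Or.inr ⟨⟨x, (Function.update_of_ne hx _ _).symm⟩,
        by simpa [Function.update_of_ne hx] using hf.ne hx⟩
  · rintro (rfl | ⟨⟨x, rfl⟩, hx⟩)
    · exact ⟨a, by simp⟩
    · have hxa : x ≠ a := fun h => hx (h ▸ rfl)
      exact ⟨x, Function.update_of_ne hxa _ _⟩

namespace SimpleGraph

variable {V : Type*}

theorem edgeSet_fromEdgeSet_of_forall_not_isDiag {s : Set (Sym2 V)}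
    (hs : ∀ e ∈ s, ¬ e.IsDiag) : (fromEdgeSet s).edgeSet = s := by
  rw [edgeSet_fromEdgeSet]
  exact sdiff_eq_left.2 (Set.disjoint_left.2 hs)

theorem IsTree.card_sub_one_mul_le_treeWeight [Finite V] {T : SimpleGraph V} (hT : T.IsTree)
    {w : Sym2 V → ℝ} {lo : ℝ} (hw : ∀ e ∈ T.edgeSet, lo ≤ w e) :
    (Nat.card V - 1 : ℕ) * lo ≤ treeWeight w T := by
  have hcard := (isTree_iff_connected_and_card.1 hT).2
  have hfin : T.edgeSet.Finite := Set.toFinite _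
  rw [treeWeight, finsum_mem_eq_finite_toFinset_sum _ hfin]
  rw [Nat.card_coe_set_eq, Set.ncard_eq_toFinset_card _ hfin] at hcard
  calc ((Nat.card V - 1 : ℕ) : ℝ) * lo = hfin.toFinset.card • lo := by
        rw [nsmul_eq_mul, ← hcard, Nat.add_sub_cancel]
    _ ≤ ∑ e ∈ hfin.toFinset, w e := Finset.card_nsmul_le_sum _ _ _ (by simpa using hw)

end SimpleGraph

section

open SimpleGraph

variable {V : Type*}

theorem treeWeight_fromEdgeSet_range {ι : Type*} [Fintype ι] {f : ι → Sym2 V}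
    (hf : Function.Injective f) (hdiag : ∀ i, ¬ (f i).IsDiag) (w : Sym2 V → ℝ) :
    treeWeight w (fromEdgeSet (Set.range f)) = ∑ i, w (f i) := by
  rw [treeWeight,
    edgeSet_fromEdgeSet_of_forall_not_isDiag (by rintro _ ⟨i, rfl⟩; exact hdiag i),
    finsum_mem_range hf, finsum_eq_sum_of_fintype]

theorem treeWeight_exchange [Finite V] (w : Sym2 V → ℝ) {T : SimpleGraph V} {e f : Sym2 V}
    (he : e ∉ T.edgeSet) (hediag : ¬ e.IsDiag) (hf : f ∈ T.edgeSet) :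
    treeWeight w (fromEdgeSet ((T.edgeSet \ {f}) ∪ {e})) = treeWeight w T - w f + w e := by
  have hfin : (T.edgeSet \ {f}).Finite := Set.toFinite _
  have hT : treeWeight w T = w f + ∑ᶠ x ∈ T.edgeSet \ {f}, w x := by
    rw [treeWeight, ← finsum_mem_insert _ (by simp) hfin, Set.insert_sdiff_singleton,
      Set.insert_eq_of_mem hf]
  rw [Set.union_singleton, treeWeight, edgeSet_fromEdgeSet_of_forall_not_isDiag ?_,
    finsum_mem_insert _ (fun h => he h.1) hfin, hT]
  · ring
  · rintro x (rfl | hx)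
    · exact hediag
    · exact T.not_isDiag_of_mem_edgeSet hx.1

variable {G T T' : SimpleGraph V} {w : Sym2 V → ℝ}

theorem ImproveStep.sub_le_treeWeight [Finite V] {lo hi : ℝ} (hw : ∀ e, w e ∈ Set.Icc lo hi)
    (h : ImproveStep G w T T') : treeWeight w T - (hi - lo) ≤ treeWeight w T' := by
  obtain ⟨u, v, f, huv, he, hf, -, -, rfl⟩ := h
  rw [treeWeight_exchange w he (G.not_isDiag_of_mem_edgeSet huv) hf]
  linarith [(hw f).2, (hw s(u, v)).1]

theorem sub_le_treeWeight_of_improveSteps [Finite V] {lo hi : ℝ}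
    (hw : ∀ e, w e ∈ Set.Icc lo hi) {S : ℕ → SimpleGraph V} {m : ℕ}
    (hS : ∀ i < m, ImproveStep G w (S i) (S (i + 1))) :
    treeWeight w (S 0) - m * (hi - lo) ≤ treeWeight w (S m) := by
  induction m with
  | zero => simp
  | succ m ih =>
    have hlast := ImproveStep.sub_le_treeWeight hw (hS m m.lt_succ_self)
    have hprefix := ih fun i hi => hS i (by omega)
    push_cast
    linarith

end

namespace TriangleBouquet

open SimpleGraph

abbrev Vertex (k : ℕ) := Option (Fin k × Bool)

variable {k : ℕ}

def root : Vertex k := none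
def a (j : Fin k) : Vertex k := some (j, false)
def b (j : Fin k) : Vertex k := some (j, true)

def edgeLabel : (Fin k × Bool) ⊕ Fin k → Sym2 (Vertex k)
  | .inl p => s(root, some p)
  | .inr j => s(a j, b j)

variable (k) in
def graph : SimpleGraph (Vertex k) := fromEdgeSet (Set.range edgeLabel)

/-- In `tree k i` the triangles `j < i` have traded the spoke `root–b j` for the rung `a j–b j`. -/
def treeLabel (i : ℕ) (p : Fin k × Bool) : (Fin k × Bool) ⊕ Fin k :=
  if p.2 ∧ (p.1 : ℕ) < i then .inr p.1 else .inl p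

def treeEdge (i : ℕ) : Fin k × Bool → Sym2 (Vertex k) := edgeLabel ∘ treeLabel i

variable (k) in
def tree (i : ℕ) : SimpleGraph (Vertex k) := fromEdgeSet (Set.range (treeEdge i))

variable (k) in
open Classical in
noncomputable def weight (e : Sym2 (Vertex k)) : ℝ :=
  if e ∈ Set.range fun j => s(root, b j) then 2 else 1

theorem edgeLabel_injective : Function.Injective (edgeLabel (k := k)) := by
  rintro (⟨j, c⟩ | j) (⟨j', c'⟩ | j') h <;> simp_all [edgeLabel, root, a, b]

theorem not_isDiag_edgeLabel (l : (Fin k × Bool) ⊕ Fin k) : ¬ (edgeLabel l).IsDiag := by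
  rcases l with p | j <;> simp [edgeLabel, root, a, b]

theorem treeLabel_injective (i : ℕ) : Function.Injective (treeLabel (k := k) i) := by
  rintro ⟨j, c⟩ ⟨j', c'⟩ h
  simp only [treeLabel] at h
  split_ifs at h <;> simp_all

theorem treeEdge_injective (i : ℕ) : Function.Injective (treeEdge (k := k) i) :=
  edgeLabel_injective.comp (treeLabel_injective i)

theorem treeEdge_succ {i : ℕ} (hi : i < k) :
    treeEdge (i + 1) =
      Function.update (treeEdge i) (⟨i, hi⟩, true) s(a ⟨i, hi⟩, b ⟨i, hi⟩) := by
  funext ⟨j, c⟩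
  by_cases hj : j = ⟨i, hi⟩
  · subst hj
    cases c <;> simp [treeEdge, treeLabel, edgeLabel]
  · have hji : (j : ℕ) ≠ i := Fin.val_ne_of_ne hj
    have hlt : (j : ℕ) < i + 1 ↔ (j : ℕ) < i := by omega
    simp [treeEdge, treeLabel, hj, hlt]

theorem edgeSet_tree (i : ℕ) : (tree k i).edgeSet = Set.range (treeEdge i) :=
  edgeSet_fromEdgeSet_of_forall_not_isDiag (by rintro _ ⟨p, rfl⟩; exact not_isDiag_edgeLabel _)

theorem card_vertex : Nat.card (Vertex k) = 2 * k + 1 := by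
  simp [Nat.card_eq_fintype_card]; ring

theorem ncard_edgeSet_graph : (graph k).edgeSet.ncard = 3 * k := by
  rw [graph, edgeSet_fromEdgeSet_of_forall_not_isDiag
    (by rintro _ ⟨l, rfl⟩; exact not_isDiag_edgeLabel l),
    Set.ncard_range_of_injective edgeLabel_injective]
  simp [Nat.card_eq_fintype_card]; ring

theorem tree_adj_root_a (i : ℕ) (j : Fin k) : (tree k i).Adj root (a j) :=
  (fromEdgeSet_adj _).2
    ⟨⟨(j, false), by simp [treeEdge, treeLabel, edgeLabel, a]⟩, by simp [root, a]⟩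

theorem tree_adj_root_b {i : ℕ} {j : Fin k} (hj : ¬ (j : ℕ) < i) : (tree k i).Adj root (b j) :=
  (fromEdgeSet_adj _).2
    ⟨⟨(j, true), by simp [treeEdge, treeLabel, edgeLabel, b, hj]⟩, by simp [root, b]⟩

theorem tree_adj_a_b {i : ℕ} {j : Fin k} (hj : (j : ℕ) < i) : (tree k i).Adj (a j) (b j) :=
  (fromEdgeSet_adj _).2
    ⟨⟨(j, true), by simp [treeEdge, treeLabel, edgeLabel, hj]⟩, by simp [a, b]⟩

theorem tree_connected (i : ℕ) : (tree k i).Connected := by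
  have hroot : ∀ v, (tree k i).Reachable root v := by
    rintro (_ | ⟨j, _ | _⟩)
    · rfl
    · exact (tree_adj_root_a i j).reachable
    · by_cases hj : (j : ℕ) < i
      · exact (tree_adj_root_a i j).reachable.trans (tree_adj_a_b hj).reachable
      · exact (tree_adj_root_b hj).reachable
  exact (connected_iff_exists_forall_reachable _).2 ⟨root, hroot⟩

theorem tree_isSpanningTree (i : ℕ) : IsSpanningTree (graph k) (tree k i) := by
  refine ⟨fromEdgeSet_mono (Set.range_comp_subset_range _ _),
    isTree_iff_connected_and_card.2 ⟨tree_connected i, ?_⟩⟩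
  rw [edgeSet_tree, Nat.card_coe_set_eq,
    Set.ncard_range_of_injective (treeEdge_injective i), card_vertex]
  simp [Nat.card_eq_fintype_card]; ring

theorem graph_connected : (graph k).Connected :=
  (tree_connected 0).mono (tree_isSpanningTree 0).1

theorem weight_mem_Icc (e : Sym2 (Vertex k)) : weight k e ∈ Set.Icc 1 2 := by
  unfold weight; split_ifs <;> norm_num

theorem weight_treeEdge (i : ℕ) (j : Fin k) (c : Bool) :
    weight k (treeEdge i (j, c)) = if c ∧ ¬ (j : ℕ) < i then 2 else 1 := by
  rcases c with _ | _ <;> by_cases hj : (j : ℕ) < i <;>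
    simp [weight, treeEdge, treeLabel, edgeLabel, root, a, b, hj]

theorem treeWeight_tree (i : ℕ) :
    treeWeight (weight k) (tree k i) = ∑ p, weight k (treeEdge i p) :=
  treeWeight_fromEdgeSet_range (treeEdge_injective i) (fun _ => not_isDiag_edgeLabel _) _

theorem treeWeight_tree_zero : treeWeight (weight k) (tree k 0) = 3 * k := by
  simp [treeWeight_tree, Fintype.sum_prod_type, weight_treeEdge]; ring

theorem treeWeight_tree_self : treeWeight (weight k) (tree k k) = 2 * k := by
  simp [treeWeight_tree, Fintype.sum_prod_type, weight_treeEdge]; ring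

theorem treeWeight_tree_self_le {T : SimpleGraph (Vertex k)} (hT : IsSpanningTree (graph k) T) :
    treeWeight (weight k) (tree k k) ≤ treeWeight (weight k) T := by
  have := hT.2.card_sub_one_mul_le_treeWeight fun e _ => (weight_mem_Icc e).1
  rw [card_vertex] at this
  rw [treeWeight_tree_self]
  simpa using this

theorem improveStep_tree {i : ℕ} (hi : i < k) :
    ImproveStep (graph k) (weight k) (tree k i) (tree k (i + 1)) := by
  set j : Fin k := ⟨i, hi⟩
  have hj : ¬ (j : ℕ) < i := lt_irrefl i
  refine ⟨a j, b j, s(root, b j), (fromEdgeSet_adj _).2 ⟨⟨.inr j, rfl⟩, by simp [a, b]⟩,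
    ?_, tree_adj_root_b hj, ?_, by simp [weight, root, a, b], ?_⟩
  · rw [edgeSet_tree]
    rintro ⟨p, hp⟩
    have : treeLabel i p = .inr j := edgeLabel_injective hp
    simp only [treeLabel] at this
    split_ifs at this with h
    exact hj (Sum.inr_injective this ▸ h.2)
  · refine ⟨.cons (tree_adj_root_a i j).symm (.cons (tree_adj_root_b hj) .nil), ?_, by simp⟩
    simp only [Walk.isPath_def, Walk.support_cons, Walk.support_nil]
    simp [root, a, b]
  · have hf : treeEdge i (j, true) = s(root, b j) := by
      simp [treeEdge, treeLabel, edgeLabel, hj, b]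
    rw [edgeSet_tree, Set.union_singleton, tree, treeEdge_succ hi,
      Set.range_update_of_injective (treeEdge_injective i), hf]

end TriangleBouquet

/-- Lower-bound family: for every `k` there is a finite connected weighted graph
with `m - n + 1 = k` non-tree edges and an initial spanning tree from which a
sequence of exactly `k` successive improvements reaches a minimum spanning tree,
and moreover every improvement sequence from that initial tree reaching a
minimum spanning tree performs at least `k` improvements (each non-tree edge is
exchanged at most once). -/
theorem improvement_lower_bound_family (k : ℕ) :
    ∃ (V : Type) (_ : Fintype V) (G : SimpleGraph V) (w : Sym2 V → ℝ)
      (T : ℕ → SimpleGraph V),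
      (∀ x, 0 < w x) ∧ G.Connected ∧ IsSpanningTree G (T 0) ∧
      G.edgeSet.ncard = (Fintype.card V - 1) + k ∧
      (∀ i < k, ImproveStep G w (T i) (T (i + 1))) ∧
      (∀ T', IsSpanningTree G T' → treeWeight w (T k) ≤ treeWeight w T') ∧
      (∀ (S : ℕ → SimpleGraph V) (m : ℕ), S 0 = T 0 →
        (∀ i < m, ImproveStep G w (S i) (S (i + 1))) →
        (∀ T', IsSpanningTree G T' → treeWeight w (S m) ≤ treeWeight w T') →
        k ≤ m) := by
  open TriangleBouquet in
  refine ⟨Vertex k, inferInstance, graph k, weight k, tree k,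
    fun e => one_pos.trans_le (weight_mem_Icc e).1, graph_connected, tree_isSpanningTree 0, ?_,
    fun i => improveStep_tree, fun T' => treeWeight_tree_self_le, fun S m hS0 hS hSmin => ?_⟩
  · rw [ncard_edgeSet_graph, ← Nat.card_eq_fintype_card, card_vertex]
    omega
  · have hdecrease := sub_le_treeWeight_of_improveSteps weight_mem_Icc hS
    have hoptimal := hSmin (tree k k) (tree_isSpanningTree k)
    rw [hS0, treeWeight_tree_zero] at hdecrease
    rw [treeWeight_tree_self] at hoptimal
    exact_mod_cast (by linarith : (k : ℝ) ≤ m)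
end
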